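/- arXiv:1810.07856 — 2 statements merged into one kernel-verified Lean document; each statement's English description precedes it below -/
import Mathlib

section
/- Let X be a 6×6 integer matrix with all entries in {−1,+1} such that det X ≠ 0 and 5 divides det X. Then |det X| = 160. In other words, 160 is the only nonzero value in the determinant spectrum of 6×6 ±1-matrices that is divisible by 5. -/
/-!
Subtracting the first row of a `±1`-matrix from the others leaves rows with entries in
`{0, ±2}`, so `2 ^ (n - 1)` divides its determinant; for `n = 6` this gives `32 ∣ det X`.
Hadamard's bound `det X ^ 2 ≤ n ^ n`, obtained from AM-GM on the eigenvalues of `X * Xᵀ`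
(whose trace is `n ^ 2`), gives `|det X| ≤ 216`. A nonzero multiple of `160` of absolute value
at most `216` is `±160`.
-/

open Matrix Finset

theorem Real.prod_le_sum_div_card_pow {ι : Type*} (s : Finset ι) (z : ι → ℝ)
    (hz : ∀ i ∈ s, 0 ≤ z i) : ∏ i ∈ s, z i ≤ ((∑ i ∈ s, z i) / #s) ^ #s := by
  rcases s.eq_empty_or_nonempty with rfl | hs
  · simp
  have hcard : (0 : ℝ) < #s := by exact_mod_cast hs.card_pos
  have amgm := Real.geom_mean_le_arith_mean_weighted s (fun _ => (#s : ℝ)⁻¹) z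
    (fun _ _ => by positivity) (by simp [hcard.ne']) hz
  rw [← mul_sum, inv_mul_eq_div] at amgm
  calc ∏ i ∈ s, z i = (∏ i ∈ s, z i ^ (#s : ℝ)⁻¹) ^ #s := by
        rw [← prod_pow]
        refine prod_congr rfl fun i hi => ?_
        rw [← Real.rpow_mul_natCast (hz i hi), inv_mul_cancel₀ hcard.ne', Real.rpow_one]
    _ ≤ ((∑ i ∈ s, z i) / #s) ^ #s :=
        pow_le_pow_left₀ (prod_nonneg fun i hi => Real.rpow_nonneg (hz i hi) _) amgm _

namespace Matrix

variable {ι : Type*} [Fintype ι] [DecidableEq ι]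

theorem pow_card_sub_one_dvd_det {R : Type*} [CommRing R] (M : Matrix ι ι R) (k : ι) (d : R)
    (hM : ∀ i j, d ∣ M i j - M k j) : d ^ (Fintype.card ι - 1) ∣ M.det := by
  choose Z hZ using hM
  let B : Matrix ι ι R := of fun i j => if i = k then M k j else M i j - M k j
  have hMB : M.det = B.det := by
    refine det_eq_of_forall_row_eq_smul_add_const (fun i => if i = k then 0 else 1) k (by simp)
      fun i j => ?_
    by_cases hi : i = k <;> simp [B, hi]
  let Z' : Matrix ι ι R := of fun i j => if i = k then M k j else Z i j
  have hBZ : B = diagonal (fun i => if i = k then 1 else d) * Z' := by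
    ext i j
    by_cases hi : i = k <;> simp [B, Z', hi, hZ]
  have hdiag : ∏ i, (if i = k then 1 else d) = d ^ (Fintype.card ι - 1) := by
    rw [prod_ite, prod_const_one, one_mul, prod_const, filter_ne', card_erase_of_mem (mem_univ k),
      card_univ]
  rw [hMB, hBZ, det_mul, det_diagonal, hdiag]
  exact dvd_mul_right _ _

theorem two_pow_card_sub_one_dvd_det {R : Type*} [CommRing R] (M : Matrix ι ι R)
    (hM : ∀ i j, M i j = 1 ∨ M i j = -1) : (2 : R) ^ (Fintype.card ι - 1) ∣ M.det := by
  cases isEmpty_or_nonempty ι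
  · simp
  obtain ⟨k⟩ := ‹Nonempty ι›
  refine M.pow_card_sub_one_dvd_det k 2 fun i j => ?_
  rcases hM i j with h | h <;> rcases hM k j with h' | h' <;> rw [h, h'] <;> norm_num

theorem PosSemidef.det_le_trace_div_card_pow {G : Matrix ι ι ℝ} (hG : G.PosSemidef) :
    G.det ≤ (G.trace / Fintype.card ι) ^ Fintype.card ι := by
  rw [hG.isHermitian.det_eq_prod_eigenvalues, hG.isHermitian.trace_eq_sum_eigenvalues]
  simpa using Real.prod_le_sum_div_card_pow univ _ fun i _ => hG.eigenvalues_nonneg i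

theorem det_sq_le_card_pow_of_abs_le_one {A : Matrix ι ι ℝ} (hA : ∀ i j, |A i j| ≤ 1) :
    A.det ^ 2 ≤ (Fintype.card ι : ℝ) ^ Fintype.card ι := by
  have hpsd : (A * Aᵀ).PosSemidef := by simpa using posSemidef_self_mul_conjTranspose A
  have htrace : (A * Aᵀ).trace ≤ Fintype.card ι * Fintype.card ι := by
    calc (A * Aᵀ).trace = ∑ i, ∑ j, A i j ^ 2 := by simp [trace, mul_apply, sq]
      _ ≤ ∑ _i : ι, ∑ _j : ι, (1 : ℝ) := by
          gcongr with i _ j _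
          exact (sq_le_one_iff_abs_le_one _).2 (hA i j)
      _ = Fintype.card ι * Fintype.card ι := by simp
  calc A.det ^ 2 = (A * Aᵀ).det := by rw [det_mul, det_transpose, sq]
    _ ≤ ((A * Aᵀ).trace / Fintype.card ι) ^ Fintype.card ι := hpsd.det_le_trace_div_card_pow
    _ ≤ (Fintype.card ι : ℝ) ^ Fintype.card ι := by
        gcongr
        · exact div_nonneg hpsd.trace_nonneg (Nat.cast_nonneg _)
        · exact div_le_of_le_mul₀ (Nat.cast_nonneg _) (Nat.cast_nonneg _) htrace

end Matrix

/-- `160` is the only nonzero value in the determinant spectrum of `6×6`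
`±1`-matrices that is divisible by `5`. -/
theorem six_by_six_det_div_five (X : Matrix (Fin 6) (Fin 6) ℤ)
    (hX : ∀ i j, X i j = 1 ∨ X i j = -1) (hne : X.det ≠ 0) (hdvd : (5 : ℤ) ∣ X.det) :
    |X.det| = 160 := by
  have h32 : (32 : ℤ) ∣ X.det := by simpa using X.two_pow_card_sub_one_dvd_det hX
  have hbound : |X.det| ≤ 216 := by
    have hreal := ((Int.castRingHom ℝ).mapMatrix X).det_sq_le_card_pow_of_abs_le_one
      fun i j => by rcases hX i j with h | h <;> simp [h]
    rw [← RingHom.map_det] at hreal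
    norm_num at hreal
    exact abs_le_of_sq_le_sq (by exact_mod_cast hreal) (by norm_num)
  obtain ⟨k, hk⟩ : (160 : ℤ) ∣ X.det :=
    (Int.isCoprime_iff_gcd_eq_one.2 rfl : IsCoprime (32 : ℤ) 5).mul_dvd h32 hdvd
  rw [abs_le] at hbound
  rw [abs_eq (by norm_num)]
  omega
end

section
/- Let X be an 8×8 matrix with all entries in {−1,+1} such that |det X| = 4096 (i.e., X is a maximal determinant 8×8 ±1-matrix). Then every 8×8 ±1-matrix Y at Hamming distance exactly 1 from X satisfies |det Y| = 3072; that is, changing any single entry of a maximal 8×8 ±1-matrix results in a matrix with determinant ±3072. -/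
open Matrix

/-- The Hamming distance between two matrices: the number of entries in which they differ. -/
noncomputable def matHammingDist {n m : ℕ} (A B : Matrix (Fin n) (Fin m) ℝ) : ℕ :=
  {p : Fin n × Fin m | A p.1 p.2 ≠ B p.1 p.2}.ncard

/-! A `±1`-matrix of order 8 with `|det X| = 8 ^ 4` attains Hadamard's bound, and in the equality
case the rows are orthogonal: the Gram matrix `X * Xᵀ` has trace `8 * 8` and determinant `8 ^ 8`,
so by AM-GM all its eigenvalues equal `8`, i.e. `X` is a Hadamard matrix. Then
`8 • adjugate X = det X • Xᵀ`, and since the determinant is affine in row `i`, flipping the entry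
`X i j` changes it by `-2 * X i j * adjugate X j i = -(2 / 8) * det X`. -/

theorem Real.eq_of_sum_eq_card_mul_of_prod_eq_pow {ι : Type*} [Fintype ι] {f : ι → ℝ} {c : ℝ}
    (hf : ∀ i, 0 ≤ f i) (hsum : ∑ i, f i = Fintype.card ι * c)
    (hprod : ∏ i, f i = c ^ Fintype.card ι) (i : ι) : f i = c := by
  have hN : Fintype.card ι ≠ 0 := Fintype.card_pos_iff.mpr ⟨i⟩ |>.ne'
  have hN' : (0 : ℝ) < Fintype.card ι := by positivity
  have hc : 0 ≤ c := by
    have : 0 ≤ (Fintype.card ι : ℝ) * c := hsum ▸ Finset.sum_nonneg fun i _ ↦ hf i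
    exact nonneg_of_mul_nonneg_right (by linarith) hN'
  have hmean : ∑ i, (Fintype.card ι : ℝ)⁻¹ * f i = c := by
    rw [← Finset.mul_sum, hsum, inv_mul_cancel_left₀ hN'.ne']
  have hamgm := Real.geom_mean_eq_arith_mean_weighted_iff_of_pos' Finset.univ
    (fun _ ↦ (Fintype.card ι : ℝ)⁻¹) f (fun _ _ ↦ inv_pos.2 hN') (by simp [hN'.ne'])
    (fun i _ ↦ hf i)
  rw [hmean] at hamgm
  refine hamgm.1 ?_ i (Finset.mem_univ i)
  rw [Real.finsetProd_rpow _ _ (fun i _ ↦ hf i), hprod, Real.pow_rpow_inv_natCast hc hN]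

namespace Matrix

variable {𝕜 R n : Type*} [Fintype n] [DecidableEq n]

section RCLike

variable [RCLike 𝕜]

open scoped ComplexOrder

theorem PosSemidef.eq_smul_one_of_trace_of_det {G : Matrix n n 𝕜} (hG : G.PosSemidef) {c : ℝ}
    (htr : G.trace = (Fintype.card n * c : ℝ)) (hdet : G.det = (c ^ Fintype.card n : ℝ)) :
    G = (c : 𝕜) • 1 := by
  have hsum : ∑ i, hG.1.eigenvalues i = Fintype.card n * c := by
    exact_mod_cast htr ▸ hG.1.trace_eq_sum_eigenvalues.symm
  have hprod : ∏ i, hG.1.eigenvalues i = c ^ Fintype.card n := by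
    exact_mod_cast hdet ▸ hG.1.det_eq_prod_eigenvalues.symm
  have hconst : RCLike.ofReal ∘ hG.1.eigenvalues = fun _ ↦ (c : 𝕜) := funext fun i ↦
    congrArg RCLike.ofReal <|
      Real.eq_of_sum_eq_card_mul_of_prod_eq_pow hG.eigenvalues_nonneg hsum hprod i
  refine hG.1.spectral_theorem.trans ?_
  rw [hconst, ← smul_one_eq_diagonal, ← Algebra.algebraMap_eq_smul_one, AlgEquivClass.commutes]

theorem mul_conjTranspose_eq_of_det_mul_star_det {A : Matrix n n 𝕜}
    (hentry : ∀ i j, A i j ∈ unitary 𝕜)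
    (hdet : A.det * star A.det = (Fintype.card n : 𝕜) ^ Fintype.card n) :
    A * Aᴴ = (Fintype.card n : 𝕜) • 1 := by
  have hdiag : ∀ i, (A * Aᴴ) i i = Fintype.card n := fun i ↦ by
    simp [mul_apply, -RCLike.star_def, Unitary.mul_star_self_of_mem (hentry i _)]
  simpa using (posSemidef_self_mul_conjTranspose A).eq_smul_one_of_trace_of_det
    (c := Fintype.card n) (by simp [trace, hdiag]) (by simpa [det_mul] using hdet)

theorem IsHadamard.of_det_mul_star_det {A : Matrix n n 𝕜} (hentry : ∀ i j, A i j ∈ unitary 𝕜)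
    (hdet : A.det * star A.det = (Fintype.card n : 𝕜) ^ Fintype.card n) : A.IsHadamard where
  apply_mem := hentry
  mul_conjTranspose := mul_conjTranspose_eq_of_det_mul_star_det hentry hdet
  conjTranspose_mul := by
    simpa using mul_conjTranspose_eq_of_det_mul_star_det (A := Aᴴ)
      (fun i j ↦ Unitary.star_mem (hentry j i)) (by simpa [mul_comm] using hdet)

end RCLike

section CommRing

variable [CommRing R] [StarRing R] {A : Matrix n n R}

theorem IsHadamard.card_smul_adjugate (hA : A.IsHadamard) :
    (Fintype.card n : R) • adjugate A = A.det • Aᴴ :=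
  calc (Fintype.card n : R) • adjugate A = adjugate A * (A * Aᴴ) := by
        rw [hA.mul_conjTranspose, Matrix.mul_smul, mul_one]
    _ = A.det • Aᴴ := by rw [← mul_assoc, adjugate_mul, Matrix.smul_mul, one_mul]

theorem IsHadamard.card_mul_det_updateRow_neg (hA : A.IsHadamard) (i j : n) :
    (Fintype.card n : R) * (A.updateRow i (Function.update (A i) j (-A i j))).det =
      (Fintype.card n - 2) * A.det := by
  have hrow : Function.update (A i) j (-A i j) = A i + (-2 * A i j) • Pi.single j 1 := by
    ext k
    rcases eq_or_ne k j with rfl | hk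
    · simp only [Function.update_self, Pi.add_apply, Pi.smul_apply, Pi.single_eq_same,
        smul_eq_mul]
      ring
    · simp [hk]
  have hcof := congrFun (congrFun hA.card_smul_adjugate j) i
  have hunit := Unitary.mul_star_self_of_mem (hA.apply_mem i j)
  simp only [smul_apply, smul_eq_mul, conjTranspose_apply] at hcof
  rw [hrow, det_updateRow_add, det_updateRow_smul, updateRow_eq_self, ← adjugate_apply]
  linear_combination (-2 * A i j) * hcof - 2 * A.det * hunit

end CommRing

end Matrix

theorem exists_eq_updateRow_of_matHammingDist_eq_one {n m : ℕ} {A B : Matrix (Fin n) (Fin m) ℝ}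
    (h : matHammingDist A B = 1) :
    ∃ i j, A i j ≠ B i j ∧ A = B.updateRow i (Function.update (B i) j (A i j)) := by
  obtain ⟨⟨i, j⟩, hp⟩ := Set.ncard_eq_one.mp h
  have hdiff : ∀ a b, A a b ≠ B a b ↔ a = i ∧ b = j := fun a b ↦ by
    simpa using Set.ext_iff.mp hp (a, b)
  refine ⟨i, j, (hdiff i j).2 ⟨rfl, rfl⟩, ?_⟩
  ext a b
  by_cases hab : a = i ∧ b = j
  · obtain ⟨rfl, rfl⟩ := hab
    simp
  · have hsame : A a b = B a b := not_not.1 (mt (hdiff a b).1 hab)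
    simp only [updateRow_apply, Function.update_apply]
    grind

/-- Changing any single entry of a maximal determinant `8×8` `±1`-matrix
(`|det X| = 4096`) results in a matrix with absolute determinant `3072`. -/
theorem neighbors_of_maximal_eight (X : Matrix (Fin 8) (Fin 8) ℝ)
    (hX : ∀ i j, X i j = 1 ∨ X i j = -1) (hdet : |X.det| = 4096) :
    ∀ Y : Matrix (Fin 8) (Fin 8) ℝ, (∀ i j, Y i j = 1 ∨ Y i j = -1) →
      matHammingDist Y X = 1 → |Y.det| = 3072 := by
  intro Y hY hdist
  obtain ⟨i, j, hne, hYX⟩ := exists_eq_updateRow_of_matHammingDist_eq_one hdist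
  have hflip : Y i j = -X i j := by
    grind [hX i j, hY i j]
  have hHad : X.IsHadamard := .of_det_mul_star_det
    (fun i j ↦ Unitary.mem_iff_eq_one_or_eq_neg_one.2 (hX i j))
    (by rw [star_trivial, ← abs_mul_abs_self, hdet]; norm_num)
  have hdetY : Y.det = 3 / 4 * X.det := by
    have := hHad.card_mul_det_updateRow_neg i j
    rw [← hflip, ← hYX, Fintype.card_fin] at this
    linear_combination this / 8
  rw [hdetY, abs_mul, hdet]
  norm_num
end
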